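/- arXiv:1301.0849 — 7 statements merged into one kernel-verified Lean document; each statement's English description precedes it below -/
import Mathlib

section
/- Let p and q be nodes of the syntax tree of a regular expression e with q ≠ p, and let w, w' be strings over Σ. Then there exists a path t : p ⇒[w] q if and only if there exists a run of the PWπ machine ⟨p; w·w'⟩ →* ⟨q; w'⟩. -/
/-!
Formalization of backtracking regular-expression matching (PWπ / PWFπ / HFπ machines).

Nodes of the syntax tree of a fixed regular expression `e` are represented as
positions (lists of booleans: `false` = left/only child, `true` = right child).
`e.sub p` is the subexpression at position `p` (`none` if the position is invalid),
and `e.kont p` is the continuation pointer `k(p)` (`none` represents `⊥`).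
-/

inductive RE (σ : Type) : Type where
  | sym : σ → RE σ
  | eps : RE σ
  | cat : RE σ → RE σ → RE σ
  | alt : RE σ → RE σ → RE σ
  | star : RE σ → RE σ

/-- A position (node) in the syntax tree. The root is `[]`. -/
abbrev RPos : Type := List Bool

/-- A node pointer: either a position or `⊥` (represented by `none`). -/
abbrev RNode : Type := Option RPos

/-- A configuration of the PWπ machine: a pointer and the remaining input. -/
abbrev RConf (σ : Type) : Type := RNode × List σ

namespace RE

variable {σ : Type}

/-- The subexpression `π(p)` of `e` at position `p` (`none` if `p` is invalid). -/
def sub : RE σ → RPos → Option (RE σ)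
  | f, [] => some f
  | cat f1 f2, b :: p => sub (if b then f2 else f1) p
  | alt f1 f2, b :: p => sub (if b then f2 else f1) p
  | star f1, false :: p => sub f1 p
  | _, _ => none

/-- `kontAux f cur rest kc` computes the continuation of the node at position
`cur ++ rest`, where `f` is the subexpression at `cur` and `kc` is the
continuation of the node at `cur`. -/
def kontAux : RE σ → RPos → RPos → RNode → RNode
  | _, _, [], kc => kc
  | cat f1 _, cur, false :: rest, _ => kontAux f1 (cur ++ [false]) rest (some (cur ++ [true]))
  | cat _ f2, cur, true :: rest, kc => kontAux f2 (cur ++ [true]) rest kc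
  | alt f1 _, cur, false :: rest, kc => kontAux f1 (cur ++ [false]) rest kc
  | alt _ f2, cur, true :: rest, kc => kontAux f2 (cur ++ [true]) rest kc
  | star f1, cur, false :: rest, _ => kontAux f1 (cur ++ [false]) rest (some cur)
  | _, _, _, _ => none

/-- The continuation pointer `k(p)`; `k(p_root) = ⊥ = none`. -/
def kont (e : RE σ) (p : RPos) : RNode := kontAux e [] p none

/-- `π` extended to node pointers. -/
def subN (e : RE σ) : RNode → Option (RE σ)
  | none => none
  | some p => e.sub p

/-- `k` extended to node pointers. -/
def kontN (e : RE σ) : RNode → RNode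
  | none => none
  | some p => e.kont p

/-- The language of a regular expression. -/
def lang : RE σ → Language σ
  | sym a => {[a]}
  | eps => 1
  | cat f1 f2 => lang f1 * lang f2
  | alt f1 f2 => lang f1 + lang f2
  | star f => KStar.kstar (lang f)

/-- The transition relation of the PWπ machine. -/
inductive PWStep (e : RE σ) : RConf σ → RConf σ → Prop
  | altL {p : RPos} {f1 f2 : RE σ} {w : List σ} :
      e.sub p = some (alt f1 f2) → PWStep e (some p, w) (some (p ++ [false]), w)
  | altR {p : RPos} {f1 f2 : RE σ} {w : List σ} :
      e.sub p = some (alt f1 f2) → PWStep e (some p, w) (some (p ++ [true]), w)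
  | starK {p : RPos} {f1 : RE σ} {w : List σ} :
      e.sub p = some (star f1) → PWStep e (some p, w) (e.kont p, w)
  | starI {p : RPos} {f1 : RE σ} {w : List σ} :
      e.sub p = some (star f1) → PWStep e (some p, w) (some (p ++ [false]), w)
  | catL {p : RPos} {f1 f2 : RE σ} {w : List σ} :
      e.sub p = some (cat f1 f2) → PWStep e (some p, w) (some (p ++ [false]), w)
  | symC {p : RPos} {a : σ} {w : List σ} :
      e.sub p = some (sym a) → PWStep e (some p, a :: w) (e.kont p, w)
  | epsC {p : RPos} {w : List σ} :
      e.sub p = some eps → PWStep e (some p, w) (e.kont p, w)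

/-- `IsPath e t p w q` : `t : p ⇒[w] q` is a path of pointers labelled by the string `w`. -/
inductive IsPath (e : RE σ) : List RNode → RNode → List σ → RNode → Prop
  | single (p : RNode) : IsPath e [p] p [] p
  | snoc {t : List RNode} {p q q' : RNode} {w w' w1 : List σ} :
      IsPath e t p w q → PWStep e (q, w' ++ w1) (q', w1) →
      IsPath e (t ++ [q']) p (w ++ w') q'

/-- The transition relation of the PWFπ (backtracking) machine on stacks of
PWπ configurations. -/
inductive PWFStep (e : RE σ) : List (RConf σ) → List (RConf σ) → Prop
  | one {c c' : RConf σ} {f : List (RConf σ)} :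
      PWStep e c c' → (∀ d, PWStep e c d → d = c') → PWFStep e (c :: f) (c' :: f)
  | two {c c1 c2 : RConf σ} {f : List (RConf σ)} :
      PWStep e c c1 → PWStep e c c2 → c1 ≠ c2 →
      (∀ d, PWStep e c d → d = c1 ∨ d = c2) → PWFStep e (c :: f) (c1 :: c2 :: f)
  | fail {c : RConf σ} {f : List (RConf σ)} :
      (∀ d, ¬ PWStep e c d) → PWFStep e (c :: f) f

end RE

/-- `NSteps R n a b` : there is a sequence of exactly `n` `R`-transitions from `a` to `b`. -/
def NSteps {α : Type*} (R : α → α → Prop) : ℕ → α → α → Prop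
  | 0, a, b => a = b
  | n + 1, a, b => ∃ c, R a c ∧ NSteps R n c b

namespace RE

variable {σ : Type}

/-- A non-consuming PWπ transition, viewed as a relation on pointers. -/
def EpsStep (e : RE σ) (p q : RNode) : Prop := PWStep e (p, ([] : List σ)) (q, [])

/-- `L` is (a list representing) `evolve(p)`: the nodes reachable from `p` by
non-consuming transitions whose subexpression is an input symbol. -/
def IsEvolve (e : RE σ) (p : RNode) (L : List RNode) : Prop :=
  ∀ q, q ∈ L ↔ (Relation.ReflTransGen (EpsStep e) p q ∧ ∃ a, e.subN q = some (sym a))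

/-- `DRel e a P r` : `r` is a result of the derivative computation `D_a(P)`. -/
inductive DRel (e : RE σ) (a : σ) : List RNode → List RNode → Prop
  | nil : DRel e a [] []
  | symNe {h : RNode} {t r : List RNode} {b : σ} :
      e.subN h = some (sym b) → b ≠ a → DRel e a t r → DRel e a (h :: t) r
  | symEq {h : RNode} {t r : List RNode} :
      e.subN h = some (sym a) → DRel e a t r → DRel e a (h :: t) (e.kontN h :: r)
  | ev {h : RNode} {t r L : List RNode} :
      (∀ b, e.subN h ≠ some (sym b)) → IsEvolve e h L →
      DRel e a (L ++ t) r → DRel e a (h :: t) r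

/-- The transition relation on wP frames: `(w, P) → (w·a, D_a(P))` when `D_a(P) ≠ []`. -/
inductive WPStep (e : RE σ) : List σ × List RNode → List σ × List RNode → Prop
  | mk {w : List σ} {P : List RNode} {a : σ} {r : List RNode} :
      DRel e a P r → r ≠ [] → WPStep e (w, P) (w ++ [a], r)

end RE

/-- A configuration of the HFπ machine: a history (set of node-sets) and a
queue of wP frames. -/
abbrev HFConf (σ : Type) : Type := Finset (Finset RNode) × List (List σ × List RNode)

namespace RE

variable {σ : Type}

/-- The transition relation of the HFπ machine: the head frame `(w, P)` is replaced by
exactly those of its wP-successors (one for each viable symbol) whose node-sets are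
not in the history `H`, and their node-sets are added to `H`. -/
inductive HFStep (e : RE σ) : HFConf σ → HFConf σ → Prop
  | mk {H : Finset (Finset RNode)} {w : List σ} {P : List RNode}
      {f : List (List σ × List RNode)} (l : List (σ × List RNode)) :
      (l.map Prod.fst).Nodup →
      (∀ x ∈ l, DRel e x.1 P x.2 ∧ x.2 ≠ [] ∧ x.2.toFinset ∉ H) →
      (∀ (a : σ) (r : List RNode), DRel e a P r → r ≠ [] → r.toFinset ∉ H →
        ∃ r', (a, r') ∈ l ∧ r'.toFinset = r.toFinset) →
      HFStep e (H, (w, P) :: f)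
        (H ∪ (l.map (fun x => x.2.toFinset)).toFinset,
         f ++ l.map (fun x => (w ++ [x.1], x.2)))

/-- Every starred subexpression of `e` has a body that does not match the empty string. -/
def NonNullableStars (e : RE σ) : Prop :=
  ∀ (p : RPos) (f : RE σ), e.sub p = some (star f) → ([] : List σ) ∉ lang f

end RE

namespace RE

variable {σ : Type} {e : RE σ}

lemma PWStep.exists_consumed {q q' : RNode} {u v : List σ} (h : PWStep e (q, u) (q', v)) :
    ∃ x, u = x ++ v ∧ ∀ v', PWStep e (q, x ++ v') (q', v') := by
  cases h with
  | symC h => exact ⟨[_], rfl, fun _ => .symC h⟩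
  | altL h => exact ⟨[], rfl, fun _ => .altL h⟩
  | altR h => exact ⟨[], rfl, fun _ => .altR h⟩
  | starK h => exact ⟨[], rfl, fun _ => .starK h⟩
  | starI h => exact ⟨[], rfl, fun _ => .starI h⟩
  | catL h => exact ⟨[], rfl, fun _ => .catL h⟩
  | epsC h => exact ⟨[], rfl, fun _ => .epsC h⟩

lemma PWStep.replace_suffix {q q' : RNode} {x u : List σ} (h : PWStep e (q, x ++ u) (q', u))
    (v : List σ) : PWStep e (q, x ++ v) (q', v) := by
  obtain ⟨y, hxy, hy⟩ := h.exists_consumed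
  rw [List.append_cancel_right hxy]
  exact hy v

lemma IsPath.reflTransGen {t : List RNode} {p q : RNode} {w : List σ} (h : IsPath e t p w q)
    (v : List σ) : Relation.ReflTransGen (PWStep e) (p, w ++ v) (q, v) := by
  induction h generalizing v with
  | single => exact .refl
  | snoc _ hstep ih =>
    rw [List.append_assoc]
    exact (ih _).tail (hstep.replace_suffix v)

lemma exists_isPath_of_reflTransGen {p : RNode} {u : List σ} {c : RConf σ}
    (h : Relation.ReflTransGen (PWStep e) (p, u) c) :
    ∃ w t, u = w ++ c.2 ∧ IsPath e t p w c.1 := by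
  induction h with
  | refl => exact ⟨[], [p], rfl, .single p⟩
  | @tail b c _ hstep ih =>
    obtain ⟨q₀, u₀⟩ := b
    obtain ⟨q₁, u₁⟩ := c
    obtain ⟨w, t, rfl, hpath⟩ := ih
    obtain ⟨x, rfl, -⟩ := hstep.exists_consumed
    exact ⟨w ++ x, t ++ [q₁], by simp, hpath.snoc hstep⟩

end RE

theorem path_iff_run_general {σ : Type} (e : RE σ) (p q : RPos)
    (w w' : List σ) :
    (∃ t, RE.IsPath e t (some p) w (some q)) ↔
      Relation.ReflTransGen (RE.PWStep e) (some p, w ++ w') (some q, w') := by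
  refine ⟨fun ⟨_, ht⟩ => ht.reflTransGen w', fun h => ?_⟩
  obtain ⟨w₀, t, hw, ht⟩ := RE.exists_isPath_of_reflTransGen h
  exact ⟨t, List.append_cancel_right hw ▸ ht⟩

/-- Lemma 1: for nodes `p ≠ q` of the syntax tree of `e`, a path
`t : p ⇒[w] q` exists iff there is a PWπ run `⟨p; w·w'⟩ →* ⟨q; w'⟩`. -/
theorem path_iff_run {σ : Type} (e : RE σ) (p q : RPos)
    (hp : (e.sub p).isSome) (hq : (e.sub q).isSome) (hne : q ≠ p)
    (w w' : List σ) :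
    (∃ t, RE.IsPath e t (some p) w (some q)) ↔
      Relation.ReflTransGen (RE.PWStep e) (some p, w ++ w') (some q, w') :=
  path_iff_run_general e p q w w'
end

section
/- Let p0 be a node of the syntax tree of e with π(p0) a Kleene star with child p1, and suppose there exist two distinct paths t1 ≠ t2 with t1 : p1 ⇒[w] p0 and t2 : p1 ⇒[w] p0 for some string w. Then for every n ∈ ℕ there exist at least 2ⁿ pairwise distinct paths t : p0 ⇒[wⁿ] p0, where wⁿ denotes the n-fold concatenation of w. -/
/-!
Prepending the step `p0 → p1` turns `t1` and `t2` into two distinct loops at `p0` reading `w`.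
If neither loop is a prefix of the other, they form a prefix code, so the `2ⁿ` ways of
concatenating `n` of them give distinct paths reading `wⁿ`. If one is a proper prefix of the
other, the remainder is a nonempty loop at `p0` reading `ε`, and prefixing `m` copies of it to
the `n`-fold iterate of the shorter loop gives distinct paths for every `m < 2ⁿ`.
-/

theorem List.flatten_map_injective {ι α : Type*} {c : ι → List α} (hne : ∀ i, c i ≠ [])
    (hc : ∀ i j, c i <+: c j → i = j) :
    Function.Injective fun l : List ι => (l.map c).flatten := by
  intro l l' h
  induction l generalizing l' with
  | nil => cases l' with
    | nil => rfl
    | cons j l' => exact absurd (List.append_eq_nil_iff.mp h.symm).1 (hne j)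
  | cons i l ih => cases l' with
    | nil => exact absurd (List.append_eq_nil_iff.mp h).1 (hne i)
    | cons j l' =>
      simp only [List.map_cons, List.flatten_cons] at h
      have hij : i = j := by
        rcases List.prefix_or_prefix_of_prefix (List.prefix_append (c i) _)
          (h ▸ List.prefix_append (c j) _) with hp | hp
        exacts [hc i j hp, (hc j i hp).symm]
      subst hij
      rw [ih (List.append_cancel_left h)]

theorem Finset.exists_card_le_of_injective {α ι : Type*} [Fintype ι] {P : α → Prop}
    {F : ι → α} (hF : Function.Injective F) (hP : ∀ i, P (F i)) :
    ∃ T : Finset α, Fintype.card ι ≤ T.card ∧ ∀ t ∈ T, P t :=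
  ⟨univ.map ⟨F, hF⟩, by simp, by simpa using hP⟩

namespace RE

variable {σ : Type} {e : RE σ}

def stepLabel (e : RE σ) (q : RNode) : List σ :=
  match e.subN q with
  | some (sym a) => [a]
  | _ => []

def pathLabel (e : RE σ) (t : List RNode) : List σ := (t.map (stepLabel e)).flatten

theorem PWStep.input_eq {q q' : RNode} {u v : List σ} (h : PWStep e (q, u) (q', v)) :
    u = stepLabel e q ++ v := by
  cases h <;> simp [stepLabel, subN, *]

namespace IsPath

variable {t : List RNode} {p q r : RNode} {w : List σ}

theorem exists_eq_cons (h : IsPath e t p w q) : ∃ s, t = p :: s := by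
  induction h with
  | single p => exact ⟨[], rfl⟩
  | snoc _ _ ih =>
    obtain ⟨s, rfl⟩ := ih
    exact ⟨_, List.cons_append ..⟩

theorem getLast?_eq (h : IsPath e t p w q) : t.getLast? = some q := by
  induction h with
  | single p => rfl
  | snoc _ _ _ => simp

theorem pathLabel_eq (h : IsPath e t p w q) : pathLabel e t = w ++ stepLabel e q := by
  induction h with
  | single p => simp [pathLabel]
  | snoc _ hstep ih =>
    have hw' := List.append_cancel_right hstep.input_eq
    simp_all [pathLabel]

theorem target_eq {p' q' : RNode} {w' : List σ} (h : IsPath e t p w q)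
    (h' : IsPath e t p' w' q') : q = q' :=
  Option.some_injective _ (h.getLast?_eq.symm.trans h'.getLast?_eq)

theorem label_eq {p' q' : RNode} {w' : List σ} (h : IsPath e t p w q)
    (h' : IsPath e t p' w' q') : w = w' := by
  have := h.pathLabel_eq.symm.trans h'.pathLabel_eq
  rw [h.target_eq h'] at this
  exact List.append_cancel_right this

theorem append {s : List RNode} {w' : List σ} (h : IsPath e t p w q)
    (h' : IsPath e (q :: s) q w' r) : IsPath e (t ++ s) p (w ++ w') r := by
  suffices ∀ {t'}, IsPath e t' q w' r → IsPath e (t ++ t'.tail) p (w ++ w') r from this h'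
  clear h'
  intro t' h'
  induction h' with
  | single _ => simpa using h
  | snoc hs hstep ih =>
    obtain ⟨s, rfl⟩ := hs.exists_eq_cons
    simpa [List.append_assoc] using (ih h).snoc hstep

theorem cons {u v : List σ} (hstep : PWStep e (p, u ++ v) (q, v)) (h : IsPath e t q w r) :
    IsPath e (p :: t) p (u ++ w) r := by
  obtain ⟨s, rfl⟩ := h.exists_eq_cons
  simpa using ((single p).snoc hstep).append h

theorem split {u v : List RNode} (h : IsPath e (u ++ v) p w q) (hu : u ≠ []) :
    ∃ w₁ w₂ m, w = w₁ ++ w₂ ∧ IsPath e u p w₁ m ∧ IsPath e (m :: v) m w₂ q := by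
  generalize ht : u ++ v = t at h
  induction h generalizing v with
  | single p =>
    obtain ⟨rfl, rfl⟩ : u = [p] ∧ v = [] := by
      rcases u with _ | ⟨a, _ | ⟨b, u⟩⟩ <;> simp_all
    exact ⟨[], [], p, rfl, single p, single p⟩
  | @snoc t p q q' w w' w1 hs hstep ih =>
    rcases List.eq_nil_or_concat' v with rfl | ⟨v, x, rfl⟩
    · rw [List.append_nil] at ht
      exact ⟨_, [], q', by simp, ht ▸ hs.snoc hstep, single q'⟩
    · obtain ⟨rfl, hx⟩ := List.append_inj' ((List.append_assoc ..).trans ht) rfl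
      obtain rfl : x = q' := by simpa using hx
      obtain ⟨w₁, w₂, m, rfl, hu', hv⟩ := ih rfl
      exact ⟨w₁, w₂ ++ w', m, by simp, hu', hv.snoc hstep⟩

theorem loop_flatten {ts : List (List RNode)} (h : ∀ s ∈ ts, IsPath e (p :: s) p w p) :
    IsPath e (p :: ts.flatten) p (List.replicate ts.length w).flatten p := by
  induction ts with
  | nil => exact single p
  | cons s ts ih =>
    simpa [List.replicate_succ] using
      (h s (by simp)).append (ih fun s hs => h s (List.mem_cons_of_mem _ hs))

end IsPath

variable {p : RNode} {w : List σ} {ta tb : List RNode}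

theorem exists_loops_of_prefix (hne : ta ≠ tb) (hpre : ta <+: tb)
    (ha : IsPath e (p :: ta) p w p) (hb : IsPath e (p :: tb) p w p) (n : ℕ) :
    ∃ T : Finset (List RNode), 2 ^ n ≤ T.card ∧
      ∀ t ∈ T, IsPath e t p (List.replicate n w).flatten p := by
  obtain ⟨z, rfl⟩ := hpre
  have hz : z ≠ [] := by rintro rfl; simp at hne
  obtain ⟨w₁, w₂, m, hw, ha', hz'⟩ := IsPath.split (u := p :: ta) hb (List.cons_ne_nil _ _)
  obtain rfl : p = m := ha.target_eq ha'
  obtain rfl : w = w₁ := ha.label_eq ha'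
  obtain rfl : w₂ = [] := List.self_eq_append_right.mp hw
  have hpath (k : ℕ) : IsPath e (p :: ((List.replicate k z).flatten ++
      (List.replicate n ta).flatten)) p (List.replicate n w).flatten p := by
    have := (IsPath.loop_flatten (ts := List.replicate k z)
      fun s hs => List.eq_of_mem_replicate hs ▸ hz').append
      (IsPath.loop_flatten (ts := List.replicate n ta)
      fun s hs => List.eq_of_mem_replicate hs ▸ ha)
    simpa only [List.length_replicate, List.flatten_replicate_nil, List.nil_append,
      List.cons_append] using this
  have hinj : Function.Injective fun k : Fin (2 ^ n) =>
      p :: ((List.replicate k z).flatten ++ (List.replicate n ta).flatten) := by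
    intro k l hkl
    have hlen := congrArg List.length hkl
    simp only [List.length_cons, List.length_append, List.length_flatten, List.map_replicate,
      List.sum_replicate, smul_eq_mul, add_left_inj] at hlen
    exact Fin.ext (Nat.eq_of_mul_eq_mul_right (List.length_pos_iff.mpr hz) hlen)
  simpa using Finset.exists_card_le_of_injective hinj (hpath ·)

theorem exists_loops_of_not_prefix (hab : ¬ ta <+: tb) (hba : ¬ tb <+: ta)
    (ha : IsPath e (p :: ta) p w p) (hb : IsPath e (p :: tb) p w p) (n : ℕ) :
    ∃ T : Finset (List RNode), 2 ^ n ≤ T.card ∧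
      ∀ t ∈ T, IsPath e t p (List.replicate n w).flatten p := by
  let c : Bool → List RNode := fun b => bif b then ta else tb
  have hcode : Function.Injective fun l : List Bool => (l.map c).flatten := by
    refine List.flatten_map_injective (fun b hb => ?_) fun i j hij => ?_
    · cases b <;> simp_all [c, List.nil_prefix]
    · cases i <;> cases j <;> simp_all [c]
  have hinj : Function.Injective fun g : Fin n → Bool => p :: (List.ofFn g |>.map c).flatten :=
    fun g g' h => List.ofFn_injective (hcode (List.cons_injective h))
  have hpath (g : Fin n → Bool) :
      IsPath e (p :: (List.ofFn g |>.map c).flatten) p (List.replicate n w).flatten p := by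
    simpa using IsPath.loop_flatten (ts := (List.ofFn g).map c) fun s hs => by
      obtain ⟨b, -, rfl⟩ := List.mem_map.mp hs
      cases b <;> assumption
  simpa using Finset.exists_card_le_of_injective hinj hpath

theorem exists_loops_of_ne (hne : ta ≠ tb) (ha : IsPath e (p :: ta) p w p)
    (hb : IsPath e (p :: tb) p w p) (n : ℕ) :
    ∃ T : Finset (List RNode), 2 ^ n ≤ T.card ∧
      ∀ t ∈ T, IsPath e t p (List.replicate n w).flatten p := by
  by_cases hab : ta <+: tb
  · exact exists_loops_of_prefix hne hab ha hb n
  by_cases hba : tb <+: ta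
  · exact exists_loops_of_prefix hne.symm hba hb ha n
  exact exists_loops_of_not_prefix hab hba ha hb n

end RE

/-- if the Kleene expression at `p0` has two distinct paths from its
body `p1` back to `p0` over the same string `w`, then for every `n` there are at
least `2ⁿ` pairwise distinct paths `p0 ⇒[wⁿ] p0`. -/
theorem pump_two_pow {σ : Type} (e : RE σ) (p0 : RPos) (f1 : RE σ)
    (hstar : e.sub p0 = some (RE.star f1)) (w : List σ)
    (t1 t2 : List RNode) (hne : t1 ≠ t2)
    (h1 : RE.IsPath e t1 (some (p0 ++ [false])) w (some p0))
    (h2 : RE.IsPath e t2 (some (p0 ++ [false])) w (some p0))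
    (n : ℕ) :
    ∃ T : Finset (List RNode), 2 ^ n ≤ T.card ∧
      ∀ t ∈ T, RE.IsPath e t (some p0) (List.replicate n w).flatten (some p0) :=
  RE.exists_loops_of_ne hne (h1.cons (u := []) (v := []) (.starI hstar))
    (h2.cons (u := []) (v := []) (.starI hstar)) n
end

section
/- For every node p of the syntax tree of e and all strings w' and w'': if w' ∈ L(π(p)), then there exists a PWπ run ⟨p; w'·w''⟩ →* ⟨k(p); w''⟩, i.e., the machine can consume exactly a string matched by the subexpression at p and arrive at p's continuation. -/
/-!
Structural induction on the subexpression at `p`. The continuations are wired so that runs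
compose: finishing the left factor of a concatenation lands on the right factor, finishing
either branch of an alternation lands on the alternation's own continuation, and finishing a
star body returns to the star node, from which the next iteration (or the exit) starts.
-/

namespace RE

variable {σ : Type} {e f f1 f2 : RE σ} {p : RPos}

theorem sub_append (hf : e.sub p = some f) (q : RPos) : e.sub (p ++ q) = f.sub q := by
  induction p generalizing e with
  | nil => simp only [sub, Option.some.injEq] at hf; subst hf; rfl
  | cons b t ih =>
    cases e with
    | sym a => simp [sub] at hf
    | eps => simp [sub] at hf
    | cat f1 f2 => cases b <;> exact ih hf
    | alt f1 f2 => cases b <;> exact ih hf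
    | star f1 =>
      cases b
      · exact ih hf
      · simp [sub] at hf

theorem kontAux_append {f f' : RE σ} {r₁ : RPos} (hf : f.sub r₁ = some f') (cur r₂ : RPos)
    (kc : RNode) :
    kontAux f cur (r₁ ++ r₂) kc = kontAux f' (cur ++ r₁) r₂ (kontAux f cur r₁ kc) := by
  induction r₁ generalizing f cur kc with
  | nil => simp only [sub, Option.some.injEq] at hf; subst hf; simp [kontAux]
  | cons b t ih =>
    cases f with
    | sym a => simp [sub] at hf
    | eps => simp [sub] at hf
    | cat f1 f2 =>
      cases b
      · simpa [kontAux] using ih hf (cur ++ [false]) (some (cur ++ [true]))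
      · simpa [kontAux] using ih hf (cur ++ [true]) kc
    | alt f1 f2 =>
      cases b
      · simpa [kontAux] using ih hf (cur ++ [false]) kc
      · simpa [kontAux] using ih hf (cur ++ [true]) kc
    | star f1 =>
      cases b
      · simpa [kontAux] using ih hf (cur ++ [false]) (some cur)
      · simp [sub] at hf

theorem kont_child (hf : e.sub p = some f) (b : Bool) :
    e.kont (p ++ [b]) = kontAux f p [b] (e.kont p) :=
  kontAux_append hf [] [b] none

theorem kont_cat_left (hf : e.sub p = some (cat f1 f2)) :
    e.kont (p ++ [false]) = some (p ++ [true]) := by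
  rw [kont_child hf]; simp [kontAux]

theorem kont_cat_right (hf : e.sub p = some (cat f1 f2)) : e.kont (p ++ [true]) = e.kont p := by
  rw [kont_child hf]; simp [kontAux]

theorem kont_alt (hf : e.sub p = some (alt f1 f2)) (b : Bool) : e.kont (p ++ [b]) = e.kont p := by
  rw [kont_child hf]; cases b <;> simp [kontAux]

theorem kont_star (hf : e.sub p = some (star f1)) : e.kont (p ++ [false]) = some p := by
  rw [kont_child hf]; simp [kontAux]

def ConsumesToKont (e : RE σ) (p : RPos) (L : Language σ) : Prop :=
  ∀ w' ∈ L, ∀ w'', Relation.ReflTransGen (PWStep e) (some p, w' ++ w'') (e.kont p, w'')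

theorem consumesToKont_sym {a : σ} (hf : e.sub p = some (sym a)) :
    ConsumesToKont e p (lang (sym a)) := by
  rintro w' rfl w''
  exact .single (.symC hf)

theorem consumesToKont_eps (hf : e.sub p = some eps) : ConsumesToKont e p (lang eps) := by
  rintro w' rfl w''
  exact .single (.epsC hf)

theorem consumesToKont_cat (hf : e.sub p = some (cat f1 f2))
    (h₁ : ConsumesToKont e (p ++ [false]) (lang f1))
    (h₂ : ConsumesToKont e (p ++ [true]) (lang f2)) :
    ConsumesToKont e p (lang (cat f1 f2)) := by
  rintro _ ⟨w₁, hw₁, w₂, hw₂, rfl⟩ w''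
  have run₁ := h₁ w₁ hw₁ (w₂ ++ w'')
  have run₂ := h₂ w₂ hw₂ w''
  rw [kont_cat_left hf] at run₁
  rw [kont_cat_right hf] at run₂
  rw [List.append_assoc]
  exact .head (.catL hf) (run₁.trans run₂)

theorem consumesToKont_alt (hf : e.sub p = some (alt f1 f2))
    (h₁ : ConsumesToKont e (p ++ [false]) (lang f1))
    (h₂ : ConsumesToKont e (p ++ [true]) (lang f2)) :
    ConsumesToKont e p (lang (alt f1 f2)) := by
  rintro w' (hw | hw) w''
  · have run := h₁ w' hw w''
    rw [kont_alt hf] at run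
    exact .head (.altL hf) run
  · have run := h₂ w' hw w''
    rw [kont_alt hf] at run
    exact .head (.altR hf) run

theorem consumesToKont_star (hf : e.sub p = some (star f1))
    (h₁ : ConsumesToKont e (p ++ [false]) (lang f1)) :
    ConsumesToKont e p (lang (star f1)) := by
  rintro _ ⟨ws, rfl, hws⟩ w''
  induction ws with
  | nil => exact .single (.starK hf)
  | cons w ws ih =>
    have run := h₁ w (hws w List.mem_cons_self) (ws.flatten ++ w'')
    rw [kont_star hf] at run
    rw [List.flatten_cons, List.append_assoc]
    exact .head (.starI hf) (run.trans (ih fun v hv => hws v (List.mem_cons_of_mem _ hv)))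

theorem consumesToKont_of_sub (hf : e.sub p = some f) : ConsumesToKont e p (lang f) := by
  induction f generalizing p with
  | sym a => exact consumesToKont_sym hf
  | eps => exact consumesToKont_eps hf
  | cat f1 f2 ih₁ ih₂ =>
    exact consumesToKont_cat hf
      (ih₁ (by rw [sub_append hf]; rfl)) (ih₂ (by rw [sub_append hf]; rfl))
  | alt f1 f2 ih₁ ih₂ =>
    exact consumesToKont_alt hf
      (ih₁ (by rw [sub_append hf]; rfl)) (ih₂ (by rw [sub_append hf]; rfl))
  | star f1 ih => exact consumesToKont_star hf (ih (by rw [sub_append hf]; rfl))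

end RE

/-- if `w' ∈ L(π(p))` then the PWπ machine can consume exactly `w'`
from `⟨p; w'·w''⟩` and arrive at the continuation `⟨k(p); w''⟩`. -/
theorem match_reaches_kont {σ : Type} (e : RE σ) (p : RPos) (f : RE σ)
    (hf : e.sub p = some f) (w' w'' : List σ) (hw : w' ∈ RE.lang f) :
    Relation.ReflTransGen (RE.PWStep e) (some p, w' ++ w'') (e.kont p, w'') :=
  RE.consumesToKont_of_sub hf w' hw w''
end

section
/- Soundness of the backtracking matcher's success: if the PWFπ machine, started from the initial configuration [⟨p_root; w⟩], reaches (by a finite sequence of PWFπ transitions) a configuration whose head is ⟨⊥; w''⟩, then there exists a PWπ run ⟨p_root; w⟩ →* ⟨⊥; w''⟩. -/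
/-! Every configuration on the PWFπ stack is PWπ-reachable from the initial one, since a PWFπ
step only pops the head configuration or replaces it by its PWπ successors. -/

theorem Relation.ReflTransGen.reflTransGen_of_mem {α : Type*} {R : α → α → Prop}
    {S : List α → List α → Prop}
    (hS : ∀ g g', S g g' → ∀ c' ∈ g', ∃ c ∈ g, Relation.ReflGen R c c') {a : α} {g : List α}
    (h : Relation.ReflTransGen S [a] g) : ∀ c ∈ g, Relation.ReflTransGen R a c := by
  induction h with
  | refl =>
    rintro c (_ | ⟨_, ⟨⟩⟩)
    exact .refl
  | tail _ hstep ih =>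
    intro c' hc'
    obtain ⟨c, hc, hcc'⟩ := hS _ _ hstep c' hc'
    cases hcc' with
    | refl => exact ih _ hc
    | single hr => exact (ih c hc).tail hr

namespace RE

variable {σ : Type} {e : RE σ}

theorem PWFStep.exists_mem_reflGen {g g' : List (RConf σ)} (h : PWFStep e g g') :
    ∀ c' ∈ g', ∃ c ∈ g, Relation.ReflGen (PWStep e) c c' := by
  cases h with
  | one hs _ =>
    rintro c' (_ | ⟨_, hc'⟩)
    · exact ⟨_, List.mem_cons_self, .single hs⟩
    · exact ⟨c', List.mem_cons_of_mem _ hc', .refl⟩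
  | two hs₁ hs₂ _ _ =>
    rintro c' (_ | ⟨_, _ | ⟨_, hc'⟩⟩)
    · exact ⟨_, List.mem_cons_self, .single hs₁⟩
    · exact ⟨_, List.mem_cons_self, .single hs₂⟩
    · exact ⟨c', List.mem_cons_of_mem _ hc', .refl⟩
  | fail _ =>
    intro c' hc'
    exact ⟨c', List.mem_cons_of_mem _ hc', .refl⟩

end RE

/-- soundness of backtracking success: if the PWFπ machine starting
from `[⟨p_root; w⟩]` reaches a configuration whose head is `⟨⊥; w''⟩`, then there is
a PWπ run `⟨p_root; w⟩ →* ⟨⊥; w''⟩`. -/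
theorem pwf_success_sound {σ : Type} (e : RE σ) (w w'' : List σ) (f : List (RConf σ))
    (h : Relation.ReflTransGen (RE.PWFStep e) [(some ([] : RPos), w)]
      ((none, w'') :: f)) :
    Relation.ReflTransGen (RE.PWStep e) (some ([] : RPos), w) (none, w'') :=
  h.reflTransGen_of_mem (fun _ _ hs => hs.exists_mem_reflGen) _ List.mem_cons_self
end

section
/- Correctness of the derive operation: assume that for every subexpression of e of the form f*, the body f does not match the empty string (so evolve and D are well-defined). Then for every list of nodes P, every symbol a ∈ Σ, and every node q: q occurs in D_a(P) if and only if there exists a node p occurring in P and a node h such that there is a path t : p ⇒[ε] h using only non-consuming PWπ transitions, π(h) = a, and k(h) = q. -/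
/-!
A symbol node has no non-consuming transitions, so the only `a`-node it reaches is itself (if
any), while a non-symbol node reaches by non-consuming transitions exactly the `a`-nodes reached
from its `evolve` list. Hence each clause of `D_a` preserves the set of continuations of `a`-nodes
reachable from the pending list.
-/

namespace RE

open Relation

variable {σ : Type} {e : RE σ}

theorem PWStep.epsStep {p q : RNode} {w : List σ} (h : PWStep e (p, w) (q, w)) :
    EpsStep e p q := by
  cases h with
  | altL h => exact .altL h
  | altR h => exact .altR h
  | starK h => exact .starK h
  | starI h => exact .starI h
  | catL h => exact .catL h
  | epsC h => exact .epsC h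

theorem IsPath.reflTransGen_epsStep {t : List RNode} {p q : RNode} {w : List σ}
    (ht : IsPath e t p w q) (hw : w = []) : ReflTransGen (EpsStep e) p q := by
  induction ht with
  | single => exact .refl
  | snoc _ hs ih =>
    obtain ⟨rfl, rfl⟩ := List.append_eq_nil_iff.mp hw
    exact .tail (ih rfl) hs.epsStep

theorem exists_isPath_nil_iff {p q : RNode} :
    (∃ t, IsPath e t p ([] : List σ) q) ↔ ReflTransGen (EpsStep e) p q := by
  refine ⟨fun ⟨_, ht⟩ => ht.reflTransGen_epsStep rfl, fun hpq => ?_⟩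
  induction hpq with
  | refl => exact ⟨_, .single p⟩
  | tail _ hs ih =>
    obtain ⟨t, ht⟩ := ih
    exact ⟨_, .snoc (w' := []) (w1 := []) ht hs⟩

theorem not_epsStep_of_subN_eq_sym {p q : RNode} {b : σ} (hp : e.subN p = some (sym b)) :
    ¬ EpsStep e p q := by
  intro hs
  cases hs <;> simp_all [subN]

theorem eq_of_reflTransGen_of_subN_eq_sym {p q : RNode} {b : σ}
    (hp : e.subN p = some (sym b)) (hpq : ReflTransGen (EpsStep e) p q) : q = p := by
  obtain rfl | ⟨_, hs, _⟩ := hpq.cases_head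
  · rfl
  · exact absurd hs (not_epsStep_of_subN_eq_sym hp)

/-- The contributions of a single node `p` to `D_a`. -/
def SymSucc (e : RE σ) (a : σ) (p q : RNode) : Prop :=
  ∃ h, ReflTransGen (EpsStep e) p h ∧ e.subN h = some (sym a) ∧ e.kontN h = q

theorem symSucc_of_subN_eq_sym {a b : σ} {p q : RNode} (hp : e.subN p = some (sym b)) :
    SymSucc e a p q ↔ b = a ∧ e.kontN p = q := by
  constructor
  · rintro ⟨h, hph, hh, rfl⟩
    obtain rfl := eq_of_reflTransGen_of_subN_eq_sym hp hph
    exact ⟨by simpa using hp.symm.trans hh, rfl⟩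
  · rintro ⟨rfl, rfl⟩
    exact ⟨p, .refl, hp, rfl⟩

theorem symSucc_iff_of_isEvolve {a : σ} {p q : RNode} {L : List RNode} (hL : IsEvolve e p L) :
    SymSucc e a p q ↔ ∃ h ∈ L, SymSucc e a h q := by
  constructor
  · rintro ⟨h, hph, hh, hq⟩
    exact ⟨h, (hL h).mpr ⟨hph, a, hh⟩, h, .refl, hh, hq⟩
  · rintro ⟨h, hmem, h', hhh', hh', hq⟩
    obtain ⟨hph, b, hb⟩ := (hL h).mp hmem
    obtain rfl := eq_of_reflTransGen_of_subN_eq_sym hb hhh'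
    exact ⟨_, hph, hh', hq⟩

theorem DRel.mem_iff {a : σ} {P r : List RNode} (hd : DRel e a P r) (q : RNode) :
    q ∈ r ↔ ∃ p ∈ P, SymSucc e a p q := by
  induction hd with
  | nil => simp
  | symNe hh hba _ ih =>
    simp [ih, symSucc_of_subN_eq_sym hh, hba]
  | symEq hh _ ih =>
    simp [ih, symSucc_of_subN_eq_sym hh, eq_comm]
  | ev _ hL _ ih =>
    simp [ih, symSucc_iff_of_isEvolve hL, or_and_right, exists_or]

end RE

theorem derive_correct_general {σ : Type} (e : RE σ)
    (a : σ) (P r : List RNode) (hd : RE.DRel e a P r) (q : RNode) :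
    q ∈ r ↔ ∃ p ∈ P, ∃ h : RNode,
      (∃ t, RE.IsPath e t p ([] : List σ) h) ∧
      e.subN h = some (RE.sym a) ∧ e.kontN h = q := by
  simp only [RE.exists_isPath_nil_iff]
  exact hd.mem_iff q

/-- correctness of derive: assuming all starred bodies of `e` are
non-nullable, a node `q` occurs in `D_a(P)` iff some `p` in `P` reaches, by a path
`p ⇒[ε] h` of non-consuming transitions, a node `h` with `π(h) = a` and `k(h) = q`. -/
theorem derive_correct {σ : Type} (e : RE σ) (hnn : RE.NonNullableStars e)
    (a : σ) (P r : List RNode) (hd : RE.DRel e a P r) (q : RNode) :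
    q ∈ r ↔ ∃ p ∈ P, ∃ h : RNode,
      (∃ t, RE.IsPath e t p ([] : List σ) h) ∧
      e.subN h = some (RE.sym a) ∧ e.kontN h = q :=
  derive_correct_general e a P r hd q
end

section
/- Termination of the HFπ machine: assume Σ is finite and that for every subexpression of e of the form f*, the body f does not match the empty string (so evolve and D are well-defined). Fix a node p0 with π(p0) a Kleene star with child p1. Then every sequence of HFπ transitions starting from the initial configuration ⟨∅; [(ε, [p1])]⟩ is finite; i.e., the HFπ machine always terminates. -/
/-!
Every node set that enters the history is the set of pointers of some `D_a(P)`. Those pointers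
are `⊥` or continuations `k(p)` of symbol positions, and `k` never lengthens a position, so they
are pointers of length at most the depth of `e`: only finitely many node sets can ever be recorded.
A step that has new successors records a node set not yet in the history, and a step without
them shortens the queue, so the pair (number of unrecorded node sets, queue length) decreases
lexicographically at every step.
-/

theorem finite_setOf_forall_mem_length_le (α : Type*) [Finite α] (n : ℕ) :
    {x : Option (List α) | ∀ l ∈ x, l.length ≤ n}.Finite := by
  refine ((List.finite_length_le α n).image some).insert none |>.subset ?_
  rintro (_ | l) hl
  · exact Set.mem_insert _ _
  · exact Set.mem_insert_of_mem _ ⟨l, hl l rfl, rfl⟩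

namespace RE

variable {σ : Type}

def depth : RE σ → ℕ
  | sym _ | eps => 0
  | cat f1 f2 | alt f1 f2 => max f1.depth f2.depth + 1
  | star f => f.depth + 1

theorem length_le_depth_of_sub_eq_some :
    ∀ {e : RE σ} {p : RPos} {f : RE σ}, e.sub p = some f → p.length ≤ e.depth
  | _, [], _, _ => Nat.zero_le _
  | cat f1 _, false :: _, _, h | alt f1 _, false :: _, _, h => by
    have := length_le_depth_of_sub_eq_some (e := f1) h
    simp only [depth, List.length_cons]; omega
  | cat _ f2, true :: _, _, h | alt _ f2, true :: _, _, h => by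
    have := length_le_depth_of_sub_eq_some (e := f2) h
    simp only [depth, List.length_cons]; omega
  | star f1, false :: _, _, h => by
    have := length_le_depth_of_sub_eq_some (e := f1) h
    simp only [depth, List.length_cons]; omega

theorem length_le_of_kontAux_eq_some {f : RE σ} {cur rest : RPos} {kc : RNode} {q : RPos}
    (hkc : ∀ q' ∈ kc, q'.length ≤ cur.length) (h : kontAux f cur rest kc = some q) :
    q.length ≤ cur.length + rest.length := by
  fun_induction kontAux f cur rest kc
  case case1 => simpa using hkc q h
  case case7 => cases h
  all_goals
    rename_i ih
    exact (ih (fun q' hq' => by grind) h).trans (by grind)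

theorem length_le_of_kont_eq_some {e : RE σ} {p q : RPos} (h : e.kont p = some q) :
    q.length ≤ p.length := by
  simpa using length_le_of_kontAux_eq_some (by simp) h

theorem DRel.length_le_depth {e : RE σ} {a : σ} {P r : List RNode} (h : DRel e a P r) :
    ∀ x ∈ r, ∀ q ∈ x, q.length ≤ e.depth := by
  induction h with
  | nil => simp
  | symNe _ _ _ ih | ev _ _ _ ih => exact ih
  | @symEq h _ _ hs _ ih =>
    rintro x (_ | ⟨_, hx⟩)
    · rcases h with _ | p
      · cases hs
      · exact fun q hq => (length_le_of_kont_eq_some hq).trans (length_le_depth_of_sub_eq_some hs)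
    · exact ih x hx

theorem exists_finset_forall_DRel_toFinset_mem (e : RE σ) :
    ∃ T : Finset (Finset RNode), ∀ a P r, DRel e a P r → r.toFinset ∈ T :=
  ⟨(finite_setOf_forall_mem_length_le Bool e.depth).toFinset.powerset, fun _ _ _ h =>
    Finset.mem_powerset.2 fun x hx => by
      simpa using h.length_le_depth x (List.mem_toFinset.1 hx)⟩

theorem HFStep.toLex_lt {e : RE σ} {T : Finset (Finset RNode)}
    (hT : ∀ a P r, DRel e a P r → r.toFinset ∈ T) {c c' : HFConf σ} (h : HFStep e c c') :
    toLex ((T \ c'.1).card, c'.2.length) < toLex ((T \ c.1).card, c.2.length) := by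
  obtain ⟨l, -, hl, -⟩ := h
  rw [Prod.Lex.toLex_lt_toLex]
  cases l with
  | nil => right; simp
  | cons x l =>
    left
    obtain ⟨hx, -, hxH⟩ := hl x List.mem_cons_self
    refine Finset.card_lt_card <| (Finset.ssubset_iff_of_subset <|
      Finset.sdiff_subset_sdiff le_rfl Finset.subset_union_left).2 ⟨x.2.toFinset, ?_, ?_⟩
    · simp [hT _ _ _ hx, hxH]
    · simp

theorem wellFounded_swap_HFStep (e : RE σ) : WellFounded (Function.swap (HFStep e)) := by
  obtain ⟨T, hT⟩ := e.exists_finset_forall_DRel_toFinset_mem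
  exact (InvImage.wf (fun c : HFConf σ => toLex ((T \ c.1).card, c.2.length))
    wellFounded_lt).mono fun _ _ h => h.toLex_lt hT

end RE

theorem hf_terminates_general {σ : Type} (e : RE σ) (p0 : RPos) :
    ¬ ∃ g : ℕ → HFConf σ,
      g 0 = ((∅ : Finset (Finset RNode)), [(([] : List σ), [some (p0 ++ [false])])]) ∧
      ∀ n, RE.HFStep e (g n) (g (n + 1)) := by
  rintro ⟨g, -, hg⟩
  exact (wellFounded_iff_isEmpty_descending_chain.1 (RE.wellFounded_swap_HFStep e)).elim ⟨g, hg⟩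

/-- termination of the HFπ machine: if `Σ` is finite and all
starred bodies of `e` are non-nullable, then there is no infinite sequence of HFπ
transitions from the initial configuration `⟨∅; [(ε, [p1])]⟩`. -/
theorem hf_terminates {σ : Type} [Fintype σ] (e : RE σ) (hnn : RE.NonNullableStars e)
    (p0 : RPos) (f1 : RE σ) (hstar : e.sub p0 = some (RE.star f1)) :
    ¬ ∃ g : ℕ → HFConf σ,
      g 0 = ((∅ : Finset (Finset RNode)), [(([] : List σ), [some (p0 ++ [false])])]) ∧
      ∀ n, RE.HFStep e (g n) (g (n + 1)) :=
  hf_terminates_general e p0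
end

section
/- Cost of exhaustive backtracking search: let p be a node (or ⊥) and w a string such that no PWπ run from ⟨p; w⟩ reaches a configuration ⟨⊥; u⟩ for any string u. Call a PWπ run from ⟨p; w⟩ maximal if it ends in a configuration with no PWπ successor. If there exist N pairwise distinct maximal PWπ runs from ⟨p; w⟩, then every finite sequence of PWFπ transitions from the configuration [⟨p; w⟩] to the empty list has length at least N. -/
/-!
A maximal PWπ run from `c` is tracked by the backtracking machine started on `[c]`: a
deterministic step strips the first configuration off every run, a branching step sorts the
runs by their second configuration into runs from `c₁` and runs from `c₂`, which are then
explored one after the other (the frames below the head are untouched until the head is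
exhausted), and a failing step accounts for the single run `[c]`. By induction on the number
of steps, the number of maximal runs from `c` is at most the length of any run emptying `[c]`.
-/

namespace RE

variable {σ : Type} {e : RE σ}

def IsMaximalRunFrom (e : RE σ) (c : RConf σ) (l : List (RConf σ)) : Prop :=
  l.head? = some c ∧ l.IsChain (PWStep e) ∧ ∀ c' d, l.getLast? = some c' → ¬ PWStep e c' d

theorem IsMaximalRunFrom.eq_cons_tail {c : RConf σ} {l : List (RConf σ)}
    (h : IsMaximalRunFrom e c l) : l = c :: l.tail := by
  obtain ⟨t, rfl⟩ := List.head?_eq_some_iff.mp h.1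
  rfl

theorem injOn_tail_isMaximalRunFrom (c : RConf σ) :
    Set.InjOn List.tail {l | IsMaximalRunFrom e c l} := fun l hl l' hl' h => by
  rw [hl.eq_cons_tail, hl'.eq_cons_tail, h]

theorem IsMaximalRunFrom.eq_singleton {c : RConf σ} {l : List (RConf σ)}
    (h : IsMaximalRunFrom e c l) (hc : ∀ d, ¬ PWStep e c d) : l = [c] := by
  obtain ⟨hhead, hchain, -⟩ := h
  obtain ⟨_ | ⟨d, t⟩, rfl⟩ := List.head?_eq_some_iff.mp hhead
  · rfl
  · exact absurd (List.isChain_cons_cons.mp hchain).1 (hc d)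

theorem IsMaximalRunFrom.tail {c d : RConf σ} {l : List (RConf σ)}
    (h : IsMaximalRunFrom e c l) (hcd : PWStep e c d) :
    ∃ c', PWStep e c c' ∧ IsMaximalRunFrom e c' l.tail := by
  obtain ⟨hhead, hchain, hlast⟩ := h
  obtain ⟨_ | ⟨c', t⟩, rfl⟩ := List.head?_eq_some_iff.mp hhead
  · exact absurd hcd (hlast c d rfl)
  · refine ⟨c', (List.isChain_cons_cons.mp hchain).1, rfl,
      (List.isChain_cons_cons.mp hchain).2, fun x y hx => hlast x y ?_⟩
    rwa [List.getLast?_cons_cons]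

theorem PWFStep.append_right {f g : List (RConf σ)} (h : PWFStep e f g) (k : List (RConf σ)) :
    PWFStep e (f ++ k) (g ++ k) := by
  cases h with
  | one h₁ h₂ => exact .one h₁ h₂
  | two h₁ h₂ h₃ h₄ => exact .two h₁ h₂ h₃ h₄
  | fail h => exact .fail h

theorem pwfStep_cons_iff {c : RConf σ} {f g : List (RConf σ)} :
    PWFStep e (c :: f) g ↔ ∃ h, PWFStep e [c] h ∧ g = h ++ f := by
  constructor
  · rintro (⟨h₁, h₂⟩ | ⟨h₁, h₂, h₃, h₄⟩ | ⟨h⟩)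
    exacts [⟨_, .one h₁ h₂, rfl⟩, ⟨_, .two h₁ h₂ h₃ h₄, rfl⟩, ⟨_, .fail h, rfl⟩]
  · rintro ⟨h, hstep, rfl⟩
    exact hstep.append_right f

theorem nSteps_pwfStep_append {m : ℕ} {f g : List (RConf σ)}
    (h : NSteps (PWFStep e) m (f ++ g) []) :
    ∃ m₁ m₂, m₁ + m₂ = m ∧ NSteps (PWFStep e) m₁ f [] ∧ NSteps (PWFStep e) m₂ g [] := by
  induction m generalizing f with
  | zero =>
    obtain ⟨rfl, rfl⟩ := List.append_eq_nil_iff.mp h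
    exact ⟨0, 0, rfl, rfl, rfl⟩
  | succ m ih =>
    cases f with
    | nil => exact ⟨0, m + 1, by omega, rfl, h⟩
    | cons c f =>
      obtain ⟨_, hstep, hrest⟩ := h
      obtain ⟨k, hk, rfl⟩ := pwfStep_cons_iff.mp hstep
      obtain ⟨m₁, m₂, hm, h₁, h₂⟩ := ih (f := k ++ f) (by rwa [List.append_assoc])
      exact ⟨m₁ + 1, m₂, by omega, ⟨_, pwfStep_cons_iff.mpr ⟨k, hk, rfl⟩, h₁⟩, h₂⟩

theorem card_le_of_nSteps_pwfStep {m : ℕ} {c : RConf σ} (hm : NSteps (PWFStep e) m [c] [])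
    {T : Finset (List (RConf σ))} (hT : ∀ l ∈ T, IsMaximalRunFrom e c l) : T.card ≤ m := by
  classical
  induction m using Nat.strong_induction_on generalizing c T with
  | _ m ih =>
    obtain _ | n := m
    · cases hm
    obtain ⟨g, hstep, hrest⟩ := hm
    have hcard : (T.image List.tail).card = T.card :=
      Finset.card_image_of_injOn fun l hl l' hl' =>
        injOn_tail_isMaximalRunFrom c (hT l hl) (hT l' hl')
    cases hstep with
    | one hc' huniq =>
      refine hcard ▸ (ih n n.lt_succ_self hrest ?_).trans n.le_succ
      simp only [Finset.mem_image]
      rintro _ ⟨l, hl, rfl⟩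
      obtain ⟨c'', hc'', hl'⟩ := (hT l hl).tail hc'
      rwa [← huniq c'' hc'']
    | @two _ c₁ c₂ _ hc₁ _ _ huniq =>
      obtain ⟨n₁, n₂, hn, h₁, h₂⟩ := nSteps_pwfStep_append (f := [c₁]) (g := [c₂]) hrest
      rw [← hcard, ← Finset.card_filter_add_card_filter_not (fun l => l.head? = some c₁)]
      refine (Nat.add_le_add (ih n₁ (by omega) h₁ ?_) (ih n₂ (by omega) h₂ ?_)).trans (by omega)
      all_goals
        intro _ hmem
        obtain ⟨hmem, hhead⟩ := Finset.mem_filter.mp hmem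
        obtain ⟨l, hl, rfl⟩ := Finset.mem_image.mp hmem
        obtain ⟨c'', hc'', hl'⟩ := (hT l hl).tail hc₁
      · obtain rfl : c'' = c₁ := Option.some_injective _ (hl'.1.symm.trans hhead)
        exact hl'
      · obtain rfl | rfl := huniq c'' hc''
        · exact absurd hl'.1 hhead
        · exact hl'
    | fail hdead =>
      calc T.card ≤ ({[c]} : Finset _).card :=
            Finset.card_le_card fun l hl => Finset.mem_singleton.mpr ((hT l hl).eq_singleton hdead)
        _ ≤ n + 1 := by simp

end RE

theorem backtracking_cost_general {σ : Type} (e : RE σ) (p : RNode)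
    (w : List σ)
    (N : ℕ) (T : Finset (List (RConf σ))) (hcard : N ≤ T.card)
    (hT : ∀ l ∈ T, l.head? = some (p, w) ∧ l.Chain' (RE.PWStep e) ∧
      ∀ (c d : RConf σ), l.getLast? = some c → ¬ RE.PWStep e c d)
    (m : ℕ) (hrun : NSteps (RE.PWFStep e) m [(p, w)] []) :
    N ≤ m :=
  hcard.trans (RE.card_le_of_nSteps_pwfStep hrun hT)

/-- cost of exhaustive backtracking: if no PWπ run from `⟨p; w⟩`
reaches `⟨⊥; u⟩`, and there are `N` pairwise distinct maximal PWπ runs from `⟨p; w⟩`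
(runs ending in a configuration with no successor), then every sequence of PWFπ
transitions from `[⟨p; w⟩]` to the empty list has length at least `N`. -/
theorem backtracking_cost {σ : Type} [DecidableEq σ] (e : RE σ) (p : RNode)
    (w : List σ)
    (hfail : ¬ ∃ u : List σ, Relation.ReflTransGen (RE.PWStep e) (p, w) (none, u))
    (N : ℕ) (T : Finset (List (RConf σ))) (hcard : N ≤ T.card)
    (hT : ∀ l ∈ T, l.head? = some (p, w) ∧ l.Chain' (RE.PWStep e) ∧
      ∀ (c d : RConf σ), l.getLast? = some c → ¬ RE.PWStep e c d)
    (m : ℕ) (hrun : NSteps (RE.PWFStep e) m [(p, w)] []) :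
    N ≤ m :=
  backtracking_cost_general e p w N T hcard hT m hrun
end
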